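/- Let n ≥ 1 and λ ≥ 2 be integers, let N be a positive integer with N ≤ λⁿ, let ξ_1, …, ξ_N ∈ ℤⁿ, let m_1, …, m_N be positive integers, and let ν_1, …, ν_{λⁿ} ∈ ℤⁿ be a complete set of representatives of ℤⁿ/λℤⁿ. Suppose p_1, …, p_N : ℝⁿ → ℂ are 2πℤⁿ-periodic and satisfy |p_l(ω)|² = 1 − sin^{2 m_l}(ξ_l·ω/2) for all ω ∈ ℝⁿ. Define τ(ω) = λ^{−n/2}( Σ_{l=1}^{N} p_l(λω) e^{i ν_l·ω} + Σ_{l=N+1}^{λⁿ} e^{i ν_l·ω} ) and g_l(ω) = λ^{−n/2} 2^{−m_l} (1 − e^{−i ξ_l·ω})^{m_l}. Then for all ω ∈ ℝⁿ: 1 − λ^{−n} Σ_{γ∈Γ} |τ(ω/λ + γ)|² = Σ_{l=1}^{N} |g_l(ω)|². -/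

import Mathlib

open Complex Real BigOperators

noncomputable section

/-- The dot product of `k ∈ ℤⁿ` with `ω ∈ ℝⁿ`. -/
def zdot {n : ℕ} (k : Fin n → ℤ) (ω : Fin n → ℝ) : ℝ := ∑ i, (k i : ℝ) * ω i

/-- `g_l(ω) = λ^{-n/2} 2^{-m_l} (1 - e^{-i ξ_l·ω})^{m_l}`. -/
def gdir (n lam : ℕ) (ξ : Fin n → ℤ) (m : ℕ) (ω : Fin n → ℝ) : ℂ :=
  (((lam : ℝ) ^ (-(n : ℝ) / 2) * ((2 : ℝ) ^ m)⁻¹ : ℝ) : ℂ) *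
    (1 - Complex.exp (-Complex.I * ((zdot ξ ω : ℝ) : ℂ))) ^ m

/-- `τ(ω) = λ^{-n/2} ( Σ_{l<N} p_l(λω) e^{i ν_l·ω} + Σ_{N≤l<λⁿ} e^{i ν_l·ω} )`. -/
def tauTW (n lam N : ℕ) (p : ℕ → (Fin n → ℝ) → ℂ) (ν : ℕ → Fin n → ℤ)
    (ω : Fin n → ℝ) : ℂ :=
  (((lam : ℝ) ^ (-(n : ℝ) / 2) : ℝ) : ℂ) *
    ((∑ l ∈ Finset.range N,
        p l (fun i => (lam : ℝ) * ω i) * Complex.exp (Complex.I * ((zdot (ν l) ω : ℝ) : ℂ)))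
      + ∑ l ∈ Finset.Ico N (lam ^ n), Complex.exp (Complex.I * ((zdot (ν l) ω : ℝ) : ℂ)))

lemma geom_exp (lam : ℕ) (hlam : 2 ≤ lam) (d : ℤ) :
    ∑ g : Fin lam, Complex.exp (Complex.I * (2 * π * d * g / lam)) =
      if (lam : ℤ) ∣ d then (lam : ℂ) else 0 := by
  have hlam0 : (lam : ℂ) ≠ 0 := Nat.cast_ne_zero.mpr (by omega)
  have hpi : (π : ℂ) ≠ 0 := by
    simpa using Complex.ofReal_ne_zero.mpr Real.pi_ne_zero
  by_cases hdvd : (lam : ℤ) ∣ d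
  · obtain ⟨e, rfl⟩ := hdvd
    rw [if_pos ⟨e, rfl⟩]
    have h1 : ∀ g : Fin lam,
        Complex.exp (Complex.I * (2 * π * ((lam : ℤ) * e : ℤ) * g / lam)) = 1 := by
      intro g
      have h2 : (Complex.I * (2 * π * ((lam : ℤ) * e : ℤ) * g / lam)) =
          ((e * g : ℤ) : ℂ) * (2 * π * Complex.I) := by
        push_cast
        field_simp
      rw [h2, Complex.exp_int_mul_two_pi_mul_I]
    push_cast at h1 ⊢
    simp [h1]
  · rw [if_neg hdvd]
    set z : ℂ := Complex.exp (Complex.I * (2 * π * d / lam)) with hz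
    have hterm : ∀ g : Fin lam,
        Complex.exp (Complex.I * (2 * π * d * g / lam)) = z ^ (g : ℕ) := by
      intro g
      rw [hz, ← Complex.exp_nat_mul]
      ring_nf
    have hzlam : z ^ lam = 1 := by
      rw [hz, ← Complex.exp_nat_mul]
      have h2 : (lam : ℂ) * (Complex.I * (2 * π * d / lam)) = (d : ℂ) * (2 * π * Complex.I) := by
        field_simp
      rw [h2, Complex.exp_int_mul_two_pi_mul_I]
    have hz1 : z ≠ 1 := by
      intro h
      rw [hz, Complex.exp_eq_one_iff] at h
      obtain ⟨k, hk⟩ := h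
      apply hdvd
      refine ⟨k, ?_⟩
      have h2 : Complex.I * (2 * π * d / lam) = Complex.I * (2 * π * k) := by
        rw [hk]; ring
      have h3 := mul_left_cancel₀ Complex.I_ne_zero h2
      have h4 : (2 * π : ℂ) * ((d : ℂ) / lam) = (2 * π : ℂ) * k := by
        rw [← h3]; ring
      have h5 := mul_left_cancel₀ (by simp [hpi] : (2 * π : ℂ) ≠ 0) h4
      field_simp at h5
      have h6 : d = k * lam := by rw [mul_comm]; exact_mod_cast h5
      rw [h6]; ring
    simp only [hterm]
    rw [Fin.sum_univ_eq_sum_range (fun g => z ^ g)]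
    rw [geom_sum_eq hz1, hzlam]
    simp

lemma ortho (n lam : ℕ) (hlam : 2 ≤ lam) (d : Fin n → ℤ) :
    ∑ γ : Fin n → Fin lam,
      Complex.exp (Complex.I * ((zdot d (fun i => 2 * π * (γ i : ℝ) / lam) : ℝ) : ℂ)) =
      if ∀ i, (lam : ℤ) ∣ d i then ((lam : ℂ)) ^ n else 0 := by
  have key : ∀ γ : Fin n → Fin lam,
      Complex.exp (Complex.I * ((zdot d (fun i => 2 * π * (γ i : ℝ) / lam) : ℝ) : ℂ)) =
      ∏ i, Complex.exp (Complex.I * (2 * π * (d i) * (γ i) / lam)) := by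
    intro γ
    rw [← Complex.exp_sum]
    congr 1
    unfold zdot
    push_cast
    rw [Finset.mul_sum]
    refine Finset.sum_congr rfl fun i _ => ?_
    ring
  simp only [key]
  rw [← Fintype.prod_sum
    (fun i (g : Fin lam) => Complex.exp (Complex.I * (2 * π * (d i) * g / lam)))]
  have h2 : ∀ i : Fin n, i ∈ Finset.univ →
      (∑ g : Fin lam, Complex.exp (Complex.I * (2 * π * (d i) * g / lam))) =
      if (lam : ℤ) ∣ d i then (lam : ℂ) else 0 := fun i _ => geom_exp lam hlam (d i)
  rw [Finset.prod_congr rfl h2]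
  by_cases h : ∀ i, (lam : ℤ) ∣ d i
  · rw [if_pos h]
    simp [h, Finset.prod_const]
  · rw [if_neg h]
    push_neg at h
    obtain ⟨i, hi⟩ := h
    rw [Finset.prod_eq_zero (Finset.mem_univ i)]
    rw [if_neg hi]

lemma rpow_half_sq (n lam : ℕ) (hlam : 2 ≤ lam) :
    ((lam : ℝ) ^ (-(n : ℝ) / 2)) ^ 2 = ((lam : ℝ) ^ n)⁻¹ := by
  have hpos : (0 : ℝ) < lam := by positivity
  rw [← Real.rpow_natCast ((lam : ℝ) ^ (-(n : ℝ) / 2)) 2, ← Real.rpow_mul hpos.le]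
  norm_num

lemma abs_one_sub_exp (θ : ℝ) :
    (‖1 - Complex.exp (-Complex.I * (θ : ℂ))‖) ^ 2 = 4 * Real.sin (θ / 2) ^ 2 := by
  have h1 : -Complex.I * (θ : ℂ) = ((-θ : ℝ) : ℂ) * Complex.I := by push_cast; ring
  rw [h1, Complex.exp_mul_I, ← Complex.ofReal_cos, ← Complex.ofReal_sin]
  have h2 : (1 : ℂ) - (↑(Real.cos (-θ)) + ↑(Real.sin (-θ)) * Complex.I)
      = ((1 - Real.cos θ : ℝ) : ℂ) + ((Real.sin θ : ℝ) : ℂ) * Complex.I := by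
    rw [Real.cos_neg, Real.sin_neg]; push_cast; ring
  rw [h2, Complex.sq_norm, Complex.normSq_add_mul_I]
  have h3 : Real.sin (θ / 2) ^ 2 = 1 / 2 - Real.cos (2 * (θ / 2)) / 2 :=
    Real.sin_sq_eq_half_sub _
  have h4 : 2 * (θ / 2) = θ := by ring
  rw [h4] at h3
  nlinarith [Real.sin_sq_add_cos_sq θ]

lemma gdir_sq (n lam : ℕ) (hlam : 2 ≤ lam) (ξ : Fin n → ℤ) (m : ℕ) (ω : Fin n → ℝ) :
    (‖gdir n lam ξ m ω‖) ^ 2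
      = ((lam : ℝ) ^ n)⁻¹ * Real.sin (zdot ξ ω / 2) ^ (2 * m) := by
  unfold gdir
  set θ := zdot ξ ω
  have hc : (0 : ℝ) ≤ (lam : ℝ) ^ (-(n : ℝ) / 2) * ((2 : ℝ) ^ m)⁻¹ := by positivity
  rw [norm_mul, norm_pow, Complex.norm_real, Real.norm_eq_abs, _root_.abs_of_nonneg hc]
  set B := ‖1 - Complex.exp (-Complex.I * ((θ : ℝ) : ℂ))‖
  have hB : B ^ 2 = 4 * Real.sin (θ / 2) ^ 2 := abs_one_sub_exp θ
  have h2m : (2 : ℝ) ^ m ≠ 0 := by positivity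
  calc ((lam : ℝ) ^ (-(n : ℝ) / 2) * ((2 : ℝ) ^ m)⁻¹ * B ^ m) ^ 2
      = ((lam : ℝ) ^ (-(n : ℝ) / 2)) ^ 2 * (((2 : ℝ) ^ m)⁻¹) ^ 2 * (B ^ 2) ^ m := by
        ring
    _ = ((lam : ℝ) ^ n)⁻¹ * (((2 : ℝ) ^ m)⁻¹) ^ 2 * (4 * Real.sin (θ / 2) ^ 2) ^ m := by
        rw [hB, rpow_half_sq n lam hlam]
    _ = ((lam : ℝ) ^ n)⁻¹ * Real.sin (θ / 2) ^ (2 * m) := by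
        have h4 : (4 : ℝ) ^ m = 2 ^ (m * 2) := by
          rw [mul_comm m 2, pow_mul]; norm_num
        rw [mul_pow, mul_comm 2 m, pow_mul]
        field_simp
        rw [h4]
        ring

lemma zdot_add {n : ℕ} (k : Fin n → ℤ) (x y : Fin n → ℝ) :
    zdot k (fun i => x i + y i) = zdot k x + zdot k y := by
  unfold zdot
  rw [← Finset.sum_add_distrib]
  exact Finset.sum_congr rfl fun i _ => by ring

lemma zdot_sub_left {n : ℕ} (k k' : Fin n → ℤ) (x : Fin n → ℝ) :
    zdot (fun i => k i - k' i) x = zdot k x - zdot k' x := by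
  unfold zdot
  rw [← Finset.sum_sub_distrib]
  exact Finset.sum_congr rfl fun i _ => by push_cast; ring

lemma exp_mul_conj (x y : ℝ) :
    Complex.exp (Complex.I * (x : ℂ)) * (starRingEnd ℂ) (Complex.exp (Complex.I * (y : ℂ)))
      = Complex.exp (Complex.I * ((x - y : ℝ) : ℂ)) := by
  rw [← Complex.exp_conj, ← Complex.exp_add]
  congr 1
  simp only [map_mul, Complex.conj_I, Complex.conj_ofReal, Complex.ofReal_sub]
  ring

lemma rep_unique (n lam : ℕ) (ν : ℕ → Fin n → ℤ)
    (hν : ∀ k : Fin n → ℤ, ∃! l : ℕ, l ∈ Finset.range (lam ^ n) ∧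
      ∃ j : Fin n → ℤ, k = fun i => ν l i + (lam : ℤ) * j i)
    {l l' : ℕ} (hl : l ∈ Finset.range (lam ^ n)) (hl' : l' ∈ Finset.range (lam ^ n))
    (hdvd : ∀ i, (lam : ℤ) ∣ ν l i - ν l' i) : l = l' := by
  have hj : ∀ i, ∃ j : ℤ, ν l i = ν l' i + (lam : ℤ) * j := by
    intro i
    obtain ⟨c, hc⟩ := hdvd i
    exact ⟨c, by omega⟩
  choose j hj using hj
  obtain ⟨u, -, hu⟩ := hν (ν l)
  have h1 : l = u := hu l ⟨hl, ⟨0, by funext i; simp⟩⟩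
  have h2 : l' = u := hu l' ⟨hl', ⟨j, by funext i; exact hj i⟩⟩
  rw [h1, h2]

/-- `1 - λ^{-n} Σ_{γ∈Γ} |τ(ω/λ + γ)|² = Σ_{l<N} |g_l(ω)|²`,
where `Γ = {2πν/λ : ν ∈ {0,…,λ-1}ⁿ}`. -/
theorem sos_of_tau (n lam N : ℕ) (hn : 1 ≤ n) (hlam : 2 ≤ lam) (hN : 1 ≤ N)
    (hNlam : N ≤ lam ^ n)
    (ξ : ℕ → Fin n → ℤ) (m : ℕ → ℕ) (hm : ∀ l < N, 1 ≤ m l)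
    (ν : ℕ → Fin n → ℤ)
    (hν : ∀ k : Fin n → ℤ, ∃! l : ℕ, l ∈ Finset.range (lam ^ n) ∧
      ∃ j : Fin n → ℤ, k = fun i => ν l i + (lam : ℤ) * j i)
    (p : ℕ → (Fin n → ℝ) → ℂ)
    (hper : ∀ l < N, ∀ ω : Fin n → ℝ, ∀ k : Fin n → ℤ,
      p l (fun i => ω i + 2 * π * (k i : ℝ)) = p l ω)
    (hp : ∀ l < N, ∀ ω : Fin n → ℝ,
      ‖p l ω‖ ^ 2 = 1 - Real.sin (zdot (ξ l) ω / 2) ^ (2 * m l)) :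
    ∀ ω : Fin n → ℝ,
      1 - ((lam : ℝ) ^ n)⁻¹ *
          ∑ γ : Fin n → Fin lam,
            ‖tauTW n lam N p ν
              (fun i => ω i / (lam : ℝ) + 2 * π * (γ i : ℝ) / (lam : ℝ))‖ ^ 2
        = ∑ l ∈ Finset.range N, ‖gdir n lam (ξ l) (m l) ω‖ ^ 2 := by
  intro ω
  have hlamR : ((lam : ℝ)) ≠ 0 := by positivity
  set R := Finset.range (lam ^ n) with hR
  set ωγ : (Fin n → Fin lam) → (Fin n → ℝ) :=
    fun γ i => ω i / (lam : ℝ) + 2 * π * (γ i : ℝ) / (lam : ℝ) with hωγ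
  set a : ℕ → ℂ := fun l => if l < N then p l ω else 1 with ha
  set E : ℕ → (Fin n → Fin lam) → ℂ :=
    fun l γ => Complex.exp (Complex.I * ((zdot (ν l) (ωγ γ) : ℝ) : ℂ)) with hE
  set C : ℝ := (lam : ℝ) ^ (-(n : ℝ) / 2) with hC
  -- Step 1: rewrite tau
  have htau : ∀ γ : Fin n → Fin lam,
      tauTW n lam N p ν (ωγ γ) = (C : ℂ) * ∑ l ∈ R, a l * E l γ := by
    intro γ
    unfold tauTW
    rw [← Finset.sum_range_add_sum_Ico (fun l => a l * E l γ) hNlam]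
    congr 1
    congr 1
    · refine Finset.sum_congr rfl fun l hl => ?_
      have hlN : l < N := Finset.mem_range.mp hl
      have harg : (fun i => (lam : ℝ) * ωγ γ i)
          = fun i => ω i + 2 * π * (((fun i => ((γ i : ℕ) : ℤ)) i : ℤ) : ℝ) := by
        funext i
        simp only [hωγ]
        push_cast
        field_simp
      rw [harg, hper l hlN ω (fun i => ((γ i : ℕ) : ℤ))]
      simp only [ha, hE, if_pos hlN]
    · refine Finset.sum_congr rfl fun l hl => ?_
      have hlN : ¬ l < N := by
        have := (Finset.mem_Ico.mp hl).1; omega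
      simp only [ha, hE, if_neg hlN, one_mul]
  -- Step 2: the key complex identity
  have hC2 : ((C : ℂ)) ^ 2 * ((lam : ℂ)) ^ n = 1 := by
    have h1 : (C : ℝ) ^ 2 = ((lam : ℝ) ^ n)⁻¹ := rpow_half_sq n lam hlam
    have h2 : ((lam : ℝ) ^ n) ≠ 0 := by positivity
    calc ((C : ℂ)) ^ 2 * ((lam : ℂ)) ^ n
        = (((C ^ 2 * (lam : ℝ) ^ n : ℝ)) : ℂ) := by push_cast; ring
      _ = 1 := by rw [h1, inv_mul_cancel₀ h2]; norm_num
  have key : ((∑ γ : Fin n → Fin lam,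
        (‖tauTW n lam N p ν (ωγ γ)‖) ^ 2 : ℝ) : ℂ)
      = ((∑ l ∈ R, (‖a l‖) ^ 2 : ℝ) : ℂ) := by
    push_cast
    have step1 : ∀ γ : Fin n → Fin lam,
        ((‖tauTW n lam N p ν (ωγ γ)‖ : ℝ) : ℂ) ^ 2
          = tauTW n lam N p ν (ωγ γ) * (starRingEnd ℂ) (tauTW n lam N p ν (ωγ γ)) := by
      intro γ
      rw [Complex.mul_conj]
      norm_cast
      rw [Complex.sq_norm]
    simp only [step1]
    have step2 : ∀ γ : Fin n → Fin lam,
        tauTW n lam N p ν (ωγ γ) * (starRingEnd ℂ) (tauTW n lam N p ν (ωγ γ))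
          = (C : ℂ) ^ 2 * ∑ l ∈ R, ∑ l' ∈ R, (a l * (starRingEnd ℂ) (a l')) *
              (Complex.exp (Complex.I *
                  ((zdot (fun i => ν l i - ν l' i) (fun i => ω i / (lam : ℝ)) : ℝ) : ℂ)) *
               Complex.exp (Complex.I *
                  ((zdot (fun i => ν l i - ν l' i)
                      (fun i => 2 * π * (γ i : ℝ) / (lam : ℝ)) : ℝ) : ℂ))) := by
      intro γ
      rw [htau γ, map_mul, Complex.conj_ofReal, map_sum]
      rw [show ((C:ℂ) * ∑ l ∈ R, a l * E l γ) * ((C:ℂ) * ∑ l' ∈ R, (starRingEnd ℂ) (a l' * E l' γ))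
        = (C:ℂ)^2 * ((∑ l ∈ R, a l * E l γ) * (∑ l' ∈ R, (starRingEnd ℂ) (a l' * E l' γ))) from by ring]
      congr 1
      rw [Finset.sum_mul_sum]
      refine Finset.sum_congr rfl fun l hl => Finset.sum_congr rfl fun l' hl' => ?_
      rw [map_mul]
      have hEE : E l γ * (starRingEnd ℂ) (E l' γ)
          = Complex.exp (Complex.I *
                ((zdot (fun i => ν l i - ν l' i) (fun i => ω i / (lam : ℝ)) : ℝ) : ℂ)) *
            Complex.exp (Complex.I *
                ((zdot (fun i => ν l i - ν l' i)
                    (fun i => 2 * π * (γ i : ℝ) / (lam : ℝ)) : ℝ) : ℂ)) := by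
        simp only [hE]
        rw [exp_mul_conj, ← Complex.exp_add]
        congr 1
        rw [← zdot_sub_left]
        have hsplit : zdot (fun i => ν l i - ν l' i) (ωγ γ)
            = zdot (fun i => ν l i - ν l' i) (fun i => ω i / (lam : ℝ))
              + zdot (fun i => ν l i - ν l' i) (fun i => 2 * π * (γ i : ℝ) / (lam : ℝ)) := by
          rw [← zdot_add]
        rw [hsplit]
        push_cast
        ring
      rw [show a l * E l γ * ((starRingEnd ℂ) (a l') * (starRingEnd ℂ) (E l' γ))
        = (a l * (starRingEnd ℂ) (a l')) * (E l γ * (starRingEnd ℂ) (E l' γ)) from by ring, hEE]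
    simp only [step2]
    rw [← Finset.mul_sum, Finset.sum_comm]
    have step3 : ∀ l ∈ R,
        (∑ γ : Fin n → Fin lam, ∑ l' ∈ R, (a l * (starRingEnd ℂ) (a l')) *
            (Complex.exp (Complex.I *
                ((zdot (fun i => ν l i - ν l' i) (fun i => ω i / (lam : ℝ)) : ℝ) : ℂ)) *
             Complex.exp (Complex.I *
                ((zdot (fun i => ν l i - ν l' i)
                    (fun i => 2 * π * (γ i : ℝ) / (lam : ℝ)) : ℝ) : ℂ))))
          = (a l * (starRingEnd ℂ) (a l)) * ((lam : ℂ)) ^ n := by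
      intro l hl
      rw [Finset.sum_comm]
      have inner : ∀ l' ∈ R,
          (∑ γ : Fin n → Fin lam, (a l * (starRingEnd ℂ) (a l')) *
            (Complex.exp (Complex.I *
                ((zdot (fun i => ν l i - ν l' i) (fun i => ω i / (lam : ℝ)) : ℝ) : ℂ)) *
             Complex.exp (Complex.I *
                ((zdot (fun i => ν l i - ν l' i)
                    (fun i => 2 * π * (γ i : ℝ) / (lam : ℝ)) : ℝ) : ℂ))))
            = if l = l' then (a l * (starRingEnd ℂ) (a l')) *
                (Complex.exp (Complex.I *
                  ((zdot (fun i => ν l i - ν l' i) (fun i => ω i / (lam : ℝ)) : ℝ) : ℂ)) *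
                  ((lam : ℂ)) ^ n) else 0 := by
        intro l' hl'
        have horth := ortho n lam hlam (fun i => ν l i - ν l' i)
        have hcond : (if ∀ i, (lam : ℤ) ∣ (ν l i - ν l' i) then ((lam : ℂ)) ^ n else 0)
            = if l = l' then ((lam : ℂ)) ^ n else 0 := by
          by_cases h : l = l'
          · rw [if_pos h, if_pos (fun i => by rw [h, sub_self]; exact dvd_zero _)]
          · rw [if_neg h, if_neg (fun hall => h (rep_unique n lam ν hν hl hl' hall))]
        calc (∑ γ : Fin n → Fin lam, (a l * (starRingEnd ℂ) (a l')) *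
            (Complex.exp (Complex.I *
                ((zdot (fun i => ν l i - ν l' i) (fun i => ω i / (lam : ℝ)) : ℝ) : ℂ)) *
             Complex.exp (Complex.I *
                ((zdot (fun i => ν l i - ν l' i)
                    (fun i => 2 * π * (γ i : ℝ) / (lam : ℝ)) : ℝ) : ℂ))))
            = ((a l * (starRingEnd ℂ) (a l')) *
              Complex.exp (Complex.I *
                ((zdot (fun i => ν l i - ν l' i) (fun i => ω i / (lam : ℝ)) : ℝ) : ℂ))) *
              ∑ γ : Fin n → Fin lam, Complex.exp (Complex.I *
                ((zdot (fun i => ν l i - ν l' i)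
                    (fun i => 2 * π * (γ i : ℝ) / (lam : ℝ)) : ℝ) : ℂ)) := by
              rw [Finset.mul_sum]
              exact Finset.sum_congr rfl fun γ _ => by ring
          _ = _ := by
              rw [horth, hcond]
              by_cases h : l = l'
              · rw [if_pos h, if_pos h]; ring
              · rw [if_neg h, if_neg h, mul_zero]
      rw [Finset.sum_congr rfl inner]
      rw [Finset.sum_ite_eq R l (fun l' => (a l * (starRingEnd ℂ) (a l')) *
        (Complex.exp (Complex.I *
          ((zdot (fun i => ν l i - ν l' i) (fun i => ω i / (lam : ℝ)) : ℝ) : ℂ)) *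
          ((lam : ℂ)) ^ n)), if_pos hl]
      have hz : zdot (fun i => ν l i - ν l i) (fun i => ω i / (lam : ℝ)) = 0 := by
        simp [zdot]
      rw [hz]
      simp
    rw [Finset.sum_congr rfl step3, ← Finset.sum_mul]
    have step4 : ∀ l ∈ R, a l * (starRingEnd ℂ) (a l)
        = ((‖a l‖ ^ 2 : ℝ) : ℂ) := by
      intro l _
      rw [Complex.mul_conj]
      norm_cast
      rw [Complex.sq_norm]
    rw [Finset.sum_congr rfl step4]
    rw [show (C:ℂ)^2 * ((∑ l ∈ R, ((‖a l‖ ^ 2 : ℝ) : ℂ)) * ((lam:ℂ))^n)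
      = ((C:ℂ)^2 * ((lam:ℂ))^n) * ∑ l ∈ R, ((‖a l‖ ^ 2 : ℝ) : ℂ) from by ring,
      hC2, one_mul]
    push_cast
    rfl
  -- Step 3: back to reals
  have hS : (∑ γ : Fin n → Fin lam,
        (‖tauTW n lam N p ν (ωγ γ)‖) ^ 2)
      = ∑ l ∈ R, (‖a l‖) ^ 2 := Complex.ofReal_injective key
  rw [hS]
  -- Step 4: final real computation
  have hsplit : ∑ l ∈ R, (‖a l‖) ^ 2
      = (∑ l ∈ Finset.range N, (‖p l ω‖) ^ 2) + ((lam ^ n - N : ℕ) : ℝ) := by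
    rw [hR, ← Finset.sum_range_add_sum_Ico (fun l => (‖a l‖) ^ 2) hNlam]
    congr 1
    · refine Finset.sum_congr rfl fun l hl => ?_
      have hlN : l < N := Finset.mem_range.mp hl
      simp only [ha, if_pos hlN]
    · have h1 : ∀ l ∈ Finset.Ico N (lam ^ n), (‖a l‖) ^ 2 = 1 := by
        intro l hl
        have hlN : ¬ l < N := by have := (Finset.mem_Ico.mp hl).1; omega
        simp [ha, if_neg hlN]
      rw [Finset.sum_congr rfl h1]
      simp [Nat.card_Ico]
  rw [hsplit]
  have hpsum : ∑ l ∈ Finset.range N, (‖p l ω‖) ^ 2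
      = (N : ℝ) - ∑ l ∈ Finset.range N, Real.sin (zdot (ξ l) ω / 2) ^ (2 * m l) := by
    rw [Finset.sum_congr rfl (fun l hl => hp l (Finset.mem_range.mp hl) ω)]
    rw [Finset.sum_sub_distrib]
    simp
  rw [hpsum]
  have hgsum : ∑ l ∈ Finset.range N, (‖gdir n lam (ξ l) (m l) ω‖) ^ 2
      = ((lam : ℝ) ^ n)⁻¹ * ∑ l ∈ Finset.range N, Real.sin (zdot (ξ l) ω / 2) ^ (2 * m l) := by
    rw [Finset.mul_sum]
    exact Finset.sum_congr rfl fun l _ => gdir_sq n lam hlam (ξ l) (m l) ω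
  rw [hgsum]
  have hcast : ((lam ^ n - N : ℕ) : ℝ) = (lam : ℝ) ^ n - (N : ℝ) := by
    push_cast [Nat.cast_sub hNlam]
    ring
  rw [hcast]
  have hLne : ((lam : ℝ) ^ n) ≠ 0 := by positivity
  field_simp
  ring
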